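/- The surface in P^4 defined by x0*x1 - x2*x3 = 0 and a0*x0^2 + a1*x1^2 + a2*x2^2 + a3*x3^2 + a4*x4^2 = 0 over a field k of characteristic not 2 is smooth if and only if (a0*a1 - a2*a3) * a0 * a1 * a2 * a3 * a4 ≠ 0. -/

import Mathlib

/-!
Both directions come from the description of the singular points of the pencil: the Jacobian
drops rank at `x` iff `∇Q₂(x) = 0` or `∇Q₁(x) = c • ∇Q₂(x)`. If some `aᵢ = 0`, the coordinate
point `eᵢ` lies on the surface and kills `∇Q₂`. If `a₀a₁ = a₂a₃ ≠ 0`, taking `λ² a₀a₁ = 1` and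
`a₂w² = -a₀` gives the singular point `(1, λa₀, w, -λa₂w, 0)` with `c = λ/2`. Conversely, the
equation `∇Q₁ = c • ∇Q₂` forces `x₀ = λ²a₀a₁ x₀`, `x₁ = λ²a₀a₁ x₁` and likewise for `(x₂, x₃)`
with `a₂a₃`, where `λ = 2c`; when `a₀a₁ ≠ a₂a₃` one of the pairs vanishes, `Q₁ = 0` then kills
the other, and `Q₂ = 0` kills `x₄`.
-/

theorem Matrix.rank_of_two_rows_eq_two_iff {K n : Type*} [Field K] [Fintype n] (u v : n → K) :
    (Matrix.of ![u, v]).rank = 2 ↔ v ≠ 0 ∧ ∀ c : K, c • v ≠ u := by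
  have : (Matrix.of ![u, v]).rank = 2 ↔ LinearIndependent K ![u, v] := by
    rw [rank_eq_finrank_span_row, linearIndependent_iff_card_eq_finrank_span, Set.finrank,
      Fintype.card_fin, eq_comm]
    rfl
  rw [this, linearIndependent_fin2]
  rfl

section Pairs

variable {R : Type*} {u v s t : R}

theorem eq_zero_of_eq_mul_of_eq_mul [CommRing R] [NoZeroDivisors R] (hu : u = s * v)
    (hv : v = t * u) (hst : s * t ≠ 1) : u = 0 ∧ v = 0 := by
  have hu0 : u = 0 := by
    have : (1 - s * t) * u = 0 := by linear_combination hu + s * hv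
    exact (mul_eq_zero.mp this).resolve_left (sub_ne_zero.mpr hst.symm)
  exact ⟨hu0, by rw [hv, hu0, mul_zero]⟩

theorem eq_zero_of_mul_eq_zero_of_eq_mul [MulZeroClass R] [NoZeroDivisors R] (hu : u = s * v)
    (hv : v = t * u) (huv : u * v = 0) : u = 0 ∧ v = 0 := by
  rcases mul_eq_zero.mp huv with hu0 | hv0
  · exact ⟨hu0, by rw [hv, hu0, mul_zero]⟩
  · exact ⟨by rw [hu, hv0, mul_zero], hv0⟩

end Pairs

section Surface

variable {K : Type*} [Field K] (a0 a1 a2 a3 a4 : K)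

def quadric₁ (x : Fin 5 → K) : K := x 0 * x 1 - x 2 * x 3

def quadric₂ (x : Fin 5 → K) : K :=
  a0 * (x 0) ^ 2 + a1 * (x 1) ^ 2 + a2 * (x 2) ^ 2 + a3 * (x 3) ^ 2 + a4 * (x 4) ^ 2

def gradient₁ (x : Fin 5 → K) : Fin 5 → K := ![x 1, x 0, -(x 3), -(x 2), 0]

def gradient₂ (x : Fin 5 → K) : Fin 5 → K :=
  ![2 * a0 * x 0, 2 * a1 * x 1, 2 * a2 * x 2, 2 * a3 * x 3, 2 * a4 * x 4]

def IsSmooth : Prop :=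
  ∀ x : Fin 5 → K, x ≠ 0 → quadric₁ x = 0 → quadric₂ a0 a1 a2 a3 a4 x = 0 →
    (Matrix.of ![gradient₁ x, gradient₂ a0 a1 a2 a3 a4 x]).rank = 2

theorem isSmooth_iff : IsSmooth a0 a1 a2 a3 a4 ↔
    ∀ x : Fin 5 → K, x ≠ 0 → quadric₁ x = 0 → quadric₂ a0 a1 a2 a3 a4 x = 0 →
      gradient₂ a0 a1 a2 a3 a4 x ≠ 0 ∧ ∀ c : K, c • gradient₂ a0 a1 a2 a3 a4 x ≠ gradient₁ x := by
  simp only [IsSmooth, Matrix.rank_of_two_rows_eq_two_iff]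

variable {a0 a1 a2 a3 a4}

theorem eq_zero_of_quadric₂_eq_zero_of_coords_eq_zero {x : Fin 5 → K} (h0 : x 0 = 0)
    (h1 : x 1 = 0) (h2 : x 2 = 0) (h3 : x 3 = 0) (ha4 : a4 ≠ 0)
    (hq : quadric₂ a0 a1 a2 a3 a4 x = 0) : x = 0 := by
  have h4 : x 4 = 0 := by
    have : a4 * x 4 ^ 2 = 0 := by simpa [quadric₂, h0, h1, h2, h3] using hq
    exact pow_eq_zero_iff two_ne_zero |>.mp ((mul_eq_zero.mp this).resolve_left ha4)
  funext i
  fin_cases i <;> assumption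

theorem gradient₂_ne_zero (h2 : (2 : K) ≠ 0) (hprod : a0 * a1 * a2 * a3 * a4 ≠ 0)
    {x : Fin 5 → K} (hx : x ≠ 0) : gradient₂ a0 a1 a2 a3 a4 x ≠ 0 := by
  intro hg
  simp only [mul_ne_zero_iff] at hprod
  obtain ⟨⟨⟨⟨ha0, ha1⟩, ha2⟩, ha3⟩, ha4⟩ := hprod
  refine hx (funext fun i => ?_)
  have := congr_fun hg i
  fin_cases i <;> simpa [gradient₂, h2, ha0, ha1, ha2, ha3, ha4] using this

theorem eq_zero_of_smul_gradient₂_eq_gradient₁ (hE : a0 * a1 ≠ a2 * a3) (ha4 : a4 ≠ 0)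
    {x : Fin 5 → K} (hq₁ : quadric₁ x = 0) (hq₂ : quadric₂ a0 a1 a2 a3 a4 x = 0) {c : K}
    (hc : c • gradient₂ a0 a1 a2 a3 a4 x = gradient₁ x) : x = 0 := by
  set l := 2 * c
  have g0 := congr_fun hc 0
  have g1 := congr_fun hc 1
  have g2 := congr_fun hc 2
  have g3 := congr_fun hc 3
  simp only [gradient₁, gradient₂, Pi.smul_apply, smul_eq_mul, Matrix.cons_val] at g0 g1 g2 g3
  have e0 : x 1 = l * a0 * x 0 := by linear_combination -g0
  have e1 : x 0 = l * a1 * x 1 := by linear_combination -g1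
  have e2 : x 3 = -(l * a2) * x 2 := by linear_combination g2
  have e3 : x 2 = -(l * a3) * x 3 := by linear_combination g3
  have hq₁' : x 0 * x 1 = x 2 * x 3 := sub_eq_zero.mp hq₁
  have hpair : l * a1 * (l * a0) ≠ 1 ∨ -(l * a3) * -(l * a2) ≠ 1 := by
    by_contra! h
    have hl : l ≠ 0 := by rintro hl; simp [hl] at h
    exact hE (mul_left_cancel₀ (pow_ne_zero 2 hl) (by linear_combination h.1 - h.2))
  rcases hpair with h01 | h23
  · obtain ⟨h0, h1⟩ := eq_zero_of_eq_mul_of_eq_mul e1 e0 h01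
    obtain ⟨h2, h3⟩ := eq_zero_of_mul_eq_zero_of_eq_mul e3 e2 (by simp [← hq₁', h0])
    exact eq_zero_of_quadric₂_eq_zero_of_coords_eq_zero h0 h1 h2 h3 ha4 hq₂
  · obtain ⟨h2, h3⟩ := eq_zero_of_eq_mul_of_eq_mul e3 e2 h23
    obtain ⟨h0, h1⟩ := eq_zero_of_mul_eq_zero_of_eq_mul e1 e0 (by simp [hq₁', h2])
    exact eq_zero_of_quadric₂_eq_zero_of_coords_eq_zero h0 h1 h2 h3 ha4 hq₂

theorem isSmooth_of_mul_ne_zero (h2 : (2 : K) ≠ 0)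
    (hprod : (a0 * a1 - a2 * a3) * a0 * a1 * a2 * a3 * a4 ≠ 0) : IsSmooth a0 a1 a2 a3 a4 := by
  have hprod' : (a0 * a1 - a2 * a3) * (a0 * a1 * a2 * a3 * a4) ≠ 0 := by
    convert hprod using 1; ring
  obtain ⟨hE, hcoord⟩ := mul_ne_zero_iff.mp hprod'
  rw [isSmooth_iff]
  intro x hx hq₁ hq₂
  exact ⟨gradient₂_ne_zero h2 hcoord hx, fun c hc => hx <|
    eq_zero_of_smul_gradient₂_eq_gradient₁ (sub_ne_zero.mp hE) (right_ne_zero_of_mul hcoord)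
      hq₁ hq₂ hc⟩

theorem exists_gradient₂_eq_zero_of_mul_eq_zero (hprod : a0 * a1 * a2 * a3 * a4 = 0) :
    ∃ x : Fin 5 → K, x ≠ 0 ∧ quadric₁ x = 0 ∧ quadric₂ a0 a1 a2 a3 a4 x = 0 ∧
      gradient₂ a0 a1 a2 a3 a4 x = 0 := by
  simp only [mul_eq_zero] at hprod
  rcases hprod with (((h | h) | h) | h) | h
  · exact ⟨Pi.single 0 1, by simp, by simp [quadric₁], by simp [quadric₂, h],
      by simp [gradient₂, h]⟩
  · exact ⟨Pi.single 1 1, by simp, by simp [quadric₁], by simp [quadric₂, h],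
      by simp [gradient₂, h]⟩
  · exact ⟨Pi.single 2 1, by simp, by simp [quadric₁], by simp [quadric₂, h],
      by simp [gradient₂, h]⟩
  · exact ⟨Pi.single 3 1, by simp, by simp [quadric₁], by simp [quadric₂, h],
      by simp [gradient₂, h]⟩
  · exact ⟨Pi.single 4 1, by simp, by simp [quadric₁], by simp [quadric₂, h],
      by simp [gradient₂, h]⟩

theorem exists_smul_gradient₂_eq_gradient₁_of_mul_eq_mul [IsAlgClosed K] (h2 : (2 : K) ≠ 0)
    (ha : a0 * a1 ≠ 0) (ha2 : a2 ≠ 0) (hE : a0 * a1 = a2 * a3) :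
    ∃ x : Fin 5 → K, x ≠ 0 ∧ quadric₁ x = 0 ∧ quadric₂ a0 a1 a2 a3 a4 x = 0 ∧
      ∃ c : K, c • gradient₂ a0 a1 a2 a3 a4 x = gradient₁ x := by
  obtain ⟨l, hl⟩ := IsAlgClosed.exists_pow_nat_eq (a0 * a1)⁻¹ two_pos
  obtain ⟨w, hw⟩ := IsAlgClosed.exists_pow_nat_eq (-a0 / a2) two_pos
  have hl' : l ^ 2 * (a0 * a1) = 1 := by rw [hl]; exact inv_mul_cancel₀ ha
  have hw' : a2 * w ^ 2 = -a0 := by rw [hw]; field_simp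
  refine ⟨![1, l * a0, w, -(l * a2 * w), 0], fun h => by simpa using congr_fun h 0, ?_, ?_,
    l / 2, ?_⟩
  · simp only [quadric₁, Matrix.cons_val]
    linear_combination l * hw'
  · simp only [quadric₂, Matrix.cons_val]
    linear_combination (a0 + a2 * w ^ 2) * hl' + 2 * hw' - a2 * w ^ 2 * l ^ 2 * hE
  · funext i
    fin_cases i <;>
      simp only [gradient₁, gradient₂, Pi.smul_apply, smul_eq_mul, Fin.zero_eta, Fin.mk_one,
        Fin.reduceFinMk, Matrix.cons_val, mul_zero] <;>
      field_simp
    · linear_combination hl'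
    · linear_combination l ^ 2 * w * hE - w * hl'

theorem not_isSmooth_of_mul_eq_zero [IsAlgClosed K] (h2 : (2 : K) ≠ 0)
    (hprod : (a0 * a1 - a2 * a3) * a0 * a1 * a2 * a3 * a4 = 0) : ¬IsSmooth a0 a1 a2 a3 a4 := by
  rw [isSmooth_iff]
  push Not
  by_cases hcoord : a0 * a1 * a2 * a3 * a4 = 0
  · obtain ⟨x, hx, hq₁, hq₂, hg⟩ := exists_gradient₂_eq_zero_of_mul_eq_zero hcoord
    exact ⟨x, hx, hq₁, hq₂, fun hg' => absurd hg hg'⟩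
  · have hE : a0 * a1 = a2 * a3 := by
      have : (a0 * a1 - a2 * a3) * (a0 * a1 * a2 * a3 * a4) = 0 := by
        linear_combination hprod
      exact sub_eq_zero.mp ((mul_eq_zero.mp this).resolve_right hcoord)
    simp only [mul_ne_zero_iff] at hcoord
    obtain ⟨x, hx, hq₁, hq₂, c, hc⟩ := exists_smul_gradient₂_eq_gradient₁_of_mul_eq_mul
      (a4 := a4) h2 (mul_ne_zero hcoord.1.1.1.1 hcoord.1.1.1.2) hcoord.1.1.2 hE
    exact ⟨x, hx, hq₁, hq₂, fun _ => ⟨c, hc⟩⟩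

end Surface

/-- The surface `x0*x1 - x2*x3 = 0`, `a0*x0^2 + ... + a4*x4^2 = 0` in `ℙ^4` over a field of
characteristic `≠ 2` is smooth (the Jacobian matrix has rank 2 at every point over an
algebraic closure) iff `(a0*a1 - a2*a3) * a0*a1*a2*a3*a4 ≠ 0`. -/
theorem smooth_iff_coeff_nonzero (K : Type) [Field K] [IsAlgClosed K] (h2 : (2 : K) ≠ 0)
    (a0 a1 a2 a3 a4 : K) :
    (∀ x : Fin 5 → K, x ≠ 0 →
        x 0 * x 1 - x 2 * x 3 = 0 →
        a0 * (x 0) ^ 2 + a1 * (x 1) ^ 2 + a2 * (x 2) ^ 2 + a3 * (x 3) ^ 2 + a4 * (x 4) ^ 2 = 0 →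
        (Matrix.of ![![x 1, x 0, -(x 3), -(x 2), 0],
            ![2 * a0 * x 0, 2 * a1 * x 1, 2 * a2 * x 2, 2 * a3 * x 3, 2 * a4 * x 4]]).rank = 2)
      ↔ (a0 * a1 - a2 * a3) * a0 * a1 * a2 * a3 * a4 ≠ 0 :=
  ⟨fun hsmooth hprod => not_isSmooth_of_mul_eq_zero h2 hprod hsmooth, isSmooth_of_mul_ne_zero h2⟩
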